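/- Let c_ii, c_jj, c_ij, s_ij ∈ ℝ with c_ii > 0, c_jj > 0, c_ij ≥ 0, and let θ_i, θ_j ∈ ℝ with |θ_i − θ_j| < π/2. If c_ij² + s_ij² = c_ii·c_jj and s_ij = tan(θ_j − θ_i)·c_ij, then c_ij = √(c_ii·c_jj)·cos(θ_i − θ_j) and s_ij = −√(c_ii·c_jj)·sin(θ_i − θ_j). -/
import Mathlib


/-- Under `c_ii, c_jj > 0`, `c_ij ≥ 0` and `|θ_i − θ_j| < π/2`, the two
consistency constraints `c_ij² + s_ij² = c_ii c_jj` and `s_ij = tan(θ_j − θ_i) c_ij`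
force `c_ij = √(c_ii c_jj) cos(θ_i − θ_j)` and `s_ij = −√(c_ii c_jj) sin(θ_i − θ_j)`. -/
theorem cs_consistency_exactness (cii cjj cij sij θi θj : ℝ)
    (hii : 0 < cii) (hjj : 0 < cjj) (hcij : 0 ≤ cij)
    (hθ : |θi - θj| < Real.pi / 2)
    (h1 : cij ^ 2 + sij ^ 2 = cii * cjj)
    (h2 : sij = Real.tan (θj - θi) * cij) :
    cij = Real.sqrt (cii * cjj) * Real.cos (θi - θj) ∧
    sij = -(Real.sqrt (cii * cjj) * Real.sin (θi - θj)) := by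
  set t := θj - θi with ht
  have habs : |t| < Real.pi / 2 := by
    have : |θj - θi| = |θi - θj| := abs_sub_comm _ _
    rw [ht, this]; exact hθ
  have hcos : 0 < Real.cos t := Real.cos_pos_of_mem_Ioo ⟨by
      have := abs_lt.mp habs; linarith [this.1], (abs_lt.mp habs).2⟩
  have htan : Real.tan t = Real.sin t / Real.cos t := Real.tan_eq_sin_div_cos t
  have hcne : Real.cos t ≠ 0 := ne_of_gt hcos
  -- cij^2 = cii*cjj*cos t ^2
  have hsq : cij ^ 2 = cii * cjj * Real.cos t ^ 2 := by
    have hpyth : Real.sin t ^ 2 + Real.cos t ^ 2 = 1 := Real.sin_sq_add_cos_sq t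
    rw [h2, htan] at h1
    field_simp at h1
    nlinarith [h1, hpyth]
  have hcij_eq : cij = Real.sqrt (cii * cjj) * Real.cos t := by
    have h1 : 0 ≤ cii * cjj := by positivity
    have : Real.sqrt (cij ^ 2) = Real.sqrt (cii * cjj * Real.cos t ^ 2) := by rw [hsq]
    rwa [Real.sqrt_sq hcij, Real.sqrt_mul h1, Real.sqrt_sq hcos.le] at this
  have hcosij : Real.cos (θi - θj) = Real.cos t := by
    rw [ht, ← Real.cos_neg]; ring_nf
  have hsinij : Real.sin (θi - θj) = -Real.sin t := by
    rw [ht, ← Real.sin_neg]; ring_nf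
  constructor
  · rw [hcosij]; exact hcij_eq
  · rw [hsinij, h2, htan, hcij_eq]
    field_simp
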